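/- Let θ ∈ (0, π/2) and define γ : (0, π) → ℝ³ by γ(s) = (sin θ·sin s·cos(cot θ·ln(tan(s/2))), sin θ·sin s·sin(cot θ·ln(tan(s/2))), −sin θ·cos s). Then γ has unit Euclidean speed, ‖γ(s)‖ = sin θ for all s (so γ lies on the sphere of radius sin θ centered at the origin), and ⟨γ'(s), W(γ(s))⟩/‖W(γ(s))‖ = cos θ for all s, where W(p) = (−p₂, p₁, 0); that is, γ makes a constant angle θ with the rotational Killing vector field W. -/

import Mathlib

open Real
open scoped RealInnerProductSpace

/-- A point/vector of Euclidean 3-space. -/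
noncomputable def v3 (x y z : ℝ) : EuclideanSpace ℝ (Fin 3) := !₂[x, y, z]

/-- The rotational Killing vector field W(p) = (−p₂, p₁, 0). -/
noncomputable def W (p : EuclideanSpace ℝ (Fin 3)) : EuclideanSpace ℝ (Fin 3) :=
  v3 (-(p 1)) (p 0) 0

/-!
On the sphere of radius `r`, a curve with polar angle `s` and longitude `φ(s) = k log tan (s/2)`
satisfies `φ' = k / sin s`, so it has speed `|r| √(1 + k²)` and the component of its velocity
along the unit parallel `W / ‖W‖` is the constant `|r| k`. For `r = sin θ`, `k = cot θ` these are
`1` and `cos θ`.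
-/

namespace Loxodrome

lemma norm_v3 (x y z : ℝ) : ‖v3 x y z‖ = √(x ^ 2 + y ^ 2 + z ^ 2) := by
  simp [v3, EuclideanSpace.norm_eq, Fin.sum_univ_three]

lemma inner_v3 (a b c x y z : ℝ) : ⟪v3 a b c, v3 x y z⟫ = a * x + b * y + c * z := by
  simp only [v3, PiLp.inner_apply, RCLike.inner_apply, conj_trivial, Fin.sum_univ_three,
    Matrix.cons_val_zero, Matrix.cons_val_one, Matrix.cons_val_two,
    Matrix.head_cons, Matrix.tail_cons]
  ring

lemma W_v3 (x y z : ℝ) : W (v3 x y z) = v3 (-y) x 0 := rfl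

lemma hasDerivAt_v3 {f g h : ℝ → ℝ} {f' g' h' s : ℝ}
    (hf : HasDerivAt f f' s) (hg : HasDerivAt g g' s) (hh : HasDerivAt h h' s) :
    HasDerivAt (fun t => v3 (f t) (g t) (h t)) (v3 f' g' h') s := by
  have hpi : HasDerivAt (fun t => (![f t, g t, h t] : Fin 3 → ℝ)) ![f', g', h'] s := by
    refine hasDerivAt_pi.2 fun i => ?_
    fin_cases i <;> simpa
  exact (PiLp.hasFDerivAt_toLp (𝕜 := ℝ) 2 _).comp_hasDerivAt s hpi

lemma hasDerivAt_log_tan_half {s : ℝ} (hs : sin s ≠ 0) :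
    HasDerivAt (fun t => log (tan (t / 2))) (1 / sin s) s := by
  have hsin_two_mul : sin s = 2 * sin (s / 2) * cos (s / 2) := by
    rw [← sin_two_mul]; ring_nf
  have hcos : cos (s / 2) ≠ 0 := fun h => hs (by simp [hsin_two_mul, h])
  have hsin : sin (s / 2) ≠ 0 := fun h => hs (by simp [hsin_two_mul, h])
  have htan : tan (s / 2) ≠ 0 := by rw [tan_eq_sin_div_cos]; exact div_ne_zero hsin hcos
  have hhalf : HasDerivAt (fun t : ℝ => t / 2) (1 / 2) s := (hasDerivAt_id s).div_const 2
  have htan_half : HasDerivAt (fun t => tan (t / 2)) (1 / cos (s / 2) ^ 2 * (1 / 2)) s :=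
    (hasDerivAt_tan hcos).comp (h₂ := tan) s hhalf
  refine (htan_half.log htan).congr_deriv ?_
  rw [tan_eq_sin_div_cos, hsin_two_mul]
  field_simp

noncomputable def longitude (k s : ℝ) : ℝ := k * log (tan (s / 2))

noncomputable def curve (r k s : ℝ) : EuclideanSpace ℝ (Fin 3) :=
  v3 (r * sin s * cos (longitude k s)) (r * sin s * sin (longitude k s)) (-(r * cos s))

lemma hasDerivAt_longitude (k : ℝ) {s : ℝ} (hs : sin s ≠ 0) :
    HasDerivAt (longitude k) (k / sin s) s := by
  rw [div_eq_mul_one_div k]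
  exact (hasDerivAt_log_tan_half hs).const_mul k

lemma hasDerivAt_curve (r k : ℝ) {s : ℝ} (hs : sin s ≠ 0) :
    HasDerivAt (curve r k)
      (v3 (r * (cos s * cos (longitude k s) - k * sin (longitude k s)))
        (r * (cos s * sin (longitude k s) + k * cos (longitude k s))) (r * sin s)) s := by
  have hφ := hasDerivAt_longitude k hs
  refine hasDerivAt_v3 ?_ ?_ ?_
  · refine (((hasDerivAt_sin s).const_mul r).mul ((hasDerivAt_cos _).comp s hφ)).congr_deriv ?_
    simp only [Function.comp_apply]
    field_simp
    ring
  · refine (((hasDerivAt_sin s).const_mul r).mul ((hasDerivAt_sin _).comp s hφ)).congr_deriv ?_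
    simp only [Function.comp_apply]
    field_simp
  · exact ((hasDerivAt_cos s).const_mul r).neg.congr_deriv (by ring)

lemma norm_curve (r k s : ℝ) : ‖curve r k s‖ = |r| := by
  rw [curve, norm_v3, ← sqrt_sq_eq_abs]
  congr 1
  linear_combination (r ^ 2 * sin s ^ 2) * sin_sq_add_cos_sq (longitude k s)
    + r ^ 2 * sin_sq_add_cos_sq s

lemma norm_deriv_curve (r k : ℝ) {s : ℝ} (hs : sin s ≠ 0) :
    ‖deriv (curve r k) s‖ = |r| * √(1 + k ^ 2) := by
  rw [(hasDerivAt_curve r k hs).deriv, norm_v3, ← sqrt_sq_eq_abs, ← sqrt_mul (sq_nonneg r)]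
  congr 1
  linear_combination (r ^ 2 * (cos s ^ 2 + k ^ 2)) * sin_sq_add_cos_sq (longitude k s)
    + r ^ 2 * sin_sq_add_cos_sq s

lemma W_curve (r k s : ℝ) :
    W (curve r k s) = v3 (-(r * sin s * sin (longitude k s))) (r * sin s * cos (longitude k s)) 0 :=
  W_v3 _ _ _

lemma inner_deriv_curve_W (r k : ℝ) {s : ℝ} (hs : sin s ≠ 0) :
    ⟪deriv (curve r k) s, W (curve r k s)⟫ = r ^ 2 * k * sin s := by
  rw [(hasDerivAt_curve r k hs).deriv, W_curve, inner_v3]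
  linear_combination (r ^ 2 * k * sin s) * sin_sq_add_cos_sq (longitude k s)

lemma norm_W_curve (r k s : ℝ) : ‖W (curve r k s)‖ = |r * sin s| := by
  rw [W_curve, norm_v3, ← sqrt_sq_eq_abs]
  congr 1
  linear_combination (r ^ 2 * sin s ^ 2) * sin_sq_add_cos_sq (longitude k s)

lemma inner_deriv_curve_W_div_norm (r k : ℝ) {s : ℝ} (hs : 0 < sin s) :
    ⟪deriv (curve r k) s, W (curve r k s)⟫ / ‖W (curve r k s)‖ = |r| * k := by
  rw [inner_deriv_curve_W r k hs.ne', norm_W_curve, abs_mul, abs_of_pos hs, ← sq_abs r]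
  rcases eq_or_ne |r| 0 with hr | hr
  · simp [hr]
  field_simp

end Loxodrome

open Loxodrome in
/-- The spherical curve (ω(s) = s) has unit speed, lies on the sphere of
radius sin θ centered at the origin, and makes the constant angle θ with W. -/
theorem stmt_6 (θ : ℝ) (hθ : θ ∈ Set.Ioo 0 (Real.pi / 2))
    (γ : ℝ → EuclideanSpace ℝ (Fin 3))
    (hγ : γ = fun s => v3
      (Real.sin θ * Real.sin s * Real.cos (Real.cot θ * Real.log (Real.tan (s / 2))))
      (Real.sin θ * Real.sin s * Real.sin (Real.cot θ * Real.log (Real.tan (s / 2))))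
      (-(Real.sin θ * Real.cos s))) :
    ∀ s ∈ Set.Ioo (0 : ℝ) Real.pi,
      ‖deriv γ s‖ = 1 ∧
      ‖γ s‖ = Real.sin θ ∧
      ⟪deriv γ s, W (γ s)⟫ / ‖W (γ s)‖ = Real.cos θ := by
  obtain rfl : γ = curve (sin θ) (cot θ) := hγ
  intro s ⟨hs0, hsπ⟩
  have hsinθ : 0 < sin θ := sin_pos_of_pos_of_lt_pi hθ.1 (by linarith [hθ.2, pi_pos])
  have hsins : 0 < sin s := sin_pos_of_pos_of_lt_pi hs0 hsπ
  have hcot : sin θ * cot θ = cos θ := by rw [cot_eq_cos_div_sin]; field_simp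
  refine ⟨?_, ?_, ?_⟩
  · rw [norm_deriv_curve _ _ hsins.ne', abs_of_pos hsinθ, ← sqrt_sq hsinθ.le,
      ← sqrt_mul (sq_nonneg _), sqrt_eq_one]
    linear_combination (sin θ * cot θ + cos θ) * hcot + sin_sq_add_cos_sq θ
  · rw [norm_curve, abs_of_pos hsinθ]
  · rw [inner_deriv_curve_W_div_norm _ _ hsins, abs_of_pos hsinθ, hcot]
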